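/- Let π be a PDLsf[Loop] path formula. For all MSCs M over P and Σ and events e such that ⟦π⟧_M(e) is nonempty: ⟦π⟧_M(e) = { f ∈ E : min_π(e) ≤proc f ≤proc max_π(e) and there exists g ∈ E with (g,f) ∈ ⟦π⟧_M }. -/

import Mathlib

set_option maxHeartbeats 1000000

/-! ## Message sequence charts -/

/-- A message sequence chart (MSC) over processes `P` and labels `Lab`.
Events are natural numbers; `E` is the finite nonempty set of events. -/
structure MSC (P : Type) (Lab : Type) where
  /-- the finite set of events -/
  E : Finset ℕ
  nonemptyE : E.Nonempty
  /-- process edges `→` (direct successor on a process) -/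
  proc : ℕ → ℕ → Prop
  /-- message edges `◁` -/
  msg : ℕ → ℕ → Prop
  /-- location (process) of each event -/
  loc : ℕ → P
  /-- label of each event -/
  lab : ℕ → Lab
  proc_mem : ∀ e f, proc e f → e ∈ E ∧ f ∈ E
  msg_mem : ∀ e f, msg e f → e ∈ E ∧ f ∈ E
  proc_loc : ∀ e f, proc e f → loc e = loc f
  msg_loc : ∀ e f, msg e f → loc e ≠ loc f
  /-- on each process, any two events are comparable w.r.t. `→⁺` -/
  proc_total : ∀ e f, e ∈ E → f ∈ E → loc e = loc f →
    e = f ∨ Relation.TransGen proc e f ∨ Relation.TransGen proc f e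
  /-- `→` is the direct-successor (covering) relation of the order `→⁺` -/
  proc_cover : ∀ e f, proc e f →
    ¬ ∃ g, Relation.TransGen proc e g ∧ Relation.TransGen proc g f
  /-- every event belongs to at most one message edge -/
  msg_once : ∀ e f e' f', msg e f → msg e' f' →
    (e = e' ∨ e = f' ∨ f = e' ∨ f = f') → e = e' ∧ f = f'
  /-- FIFO condition -/
  fifo : ∀ e f e' f', msg e f → msg e' f' → loc e = loc e' → loc f = loc f' →
    (Relation.ReflTransGen proc e e' ↔ Relation.ReflTransGen proc f f')
  /-- `→ ∪ ◁` is acyclic -/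
  acyclic : ∀ e, ¬ Relation.TransGen (fun a b => proc a b ∨ msg a b) e e

namespace MSC

variable {P Lab : Type}

/-- `≤proc`, the reflexive transitive closure of `→`. -/
def procLe (M : MSC P Lab) : ℕ → ℕ → Prop := Relation.ReflTransGen M.proc

/-- `<proc`, the transitive closure of `→`. -/
def procLt (M : MSC P Lab) : ℕ → ℕ → Prop := Relation.TransGen M.proc

/-- the happened-before relation `≤ = (→ ∪ ◁)*`. -/
def hb (M : MSC P Lab) : ℕ → ℕ → Prop :=
  Relation.ReflTransGen (fun a b => M.proc a b ∨ M.msg a b)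

/-- Relabelling an MSC (same events and edges, new labelling). -/
def relabel {Γ : Type} (M : MSC P Lab) (γ : ℕ → Γ) : MSC P Γ where
  E := M.E
  nonemptyE := M.nonemptyE
  proc := M.proc
  msg := M.msg
  loc := M.loc
  lab := γ
  proc_mem := M.proc_mem
  msg_mem := M.msg_mem
  proc_loc := M.proc_loc
  msg_loc := M.msg_loc
  proc_total := M.proc_total
  proc_cover := M.proc_cover
  msg_once := M.msg_once
  fifo := M.fifo
  acyclic := M.acyclic

end MSC

/-! ## Star-free PDL -/

mutual
/-- Event formulas of star-free PDL. -/
inductive EF (P Lab : Type) : Type where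
  | proc : P → EF P Lab
  | lab : Lab → EF P Lab
  | or : EF P Lab → EF P Lab → EF P Lab
  | not : EF P Lab → EF P Lab
  | dia : PF P Lab → EF P Lab → EF P Lab
  | loop : PF P Lab → EF P Lab
/-- Path formulas of star-free PDL. -/
inductive PF (P Lab : Type) : Type where
  | next : PF P Lab
  | prev : PF P Lab
  | msg : P → P → PF P Lab
  | msgInv : P → P → PF P Lab
  | nextG : EF P Lab → PF P Lab
  | prevG : EF P Lab → PF P Lab
  | jump : P → P → PF P Lab
  | test : EF P Lab → PF P Lab
  | comp : PF P Lab → PF P Lab → PF P Lab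
  | union : PF P Lab → PF P Lab → PF P Lab
  | inter : PF P Lab → PF P Lab → PF P Lab
  | compl : PF P Lab → PF P Lab
end

mutual
/-- Satisfaction of event formulas at an event. -/
def EF.sat {P Lab : Type} (M : MSC P Lab) : EF P Lab → ℕ → Prop
  | .proc p, e => e ∈ M.E ∧ M.loc e = p
  | .lab a, e => e ∈ M.E ∧ M.lab e = a
  | .or φ ψ, e => EF.sat M φ e ∨ EF.sat M ψ e
  | .not φ, e => e ∈ M.E ∧ ¬ EF.sat M φ e
  | .dia π φ, e => ∃ f, PF.sem M π e f ∧ EF.sat M φ f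
  | .loop π, e => PF.sem M π e e
/-- Semantics of path formulas as binary relations on events. -/
def PF.sem {P Lab : Type} (M : MSC P Lab) : PF P Lab → ℕ → ℕ → Prop
  | .next, e, f => M.proc e f
  | .prev, e, f => M.proc f e
  | .msg p q, e, f => M.msg e f ∧ M.loc e = p ∧ M.loc f = q
  | .msgInv p q, e, f => M.msg f e ∧ M.loc f = p ∧ M.loc e = q
  | .nextG φ, e, f => M.procLt e f ∧ ∀ g, M.procLt e g → M.procLt g f → EF.sat M φ g
  | .prevG φ, e, f => M.procLt f e ∧ ∀ g, M.procLt f g → M.procLt g e → EF.sat M φ g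
  | .jump p r, e, f => e ∈ M.E ∧ f ∈ M.E ∧ M.loc e = p ∧ M.loc f = r
  | .test φ, e, f => e = f ∧ EF.sat M φ e
  | .comp π₁ π₂, e, f => ∃ g, PF.sem M π₁ e g ∧ PF.sem M π₂ g f
  | .union π₁ π₂, e, f => PF.sem M π₁ e f ∨ PF.sem M π₂ e f
  | .inter π₁ π₂, e, f => PF.sem M π₁ e f ∧ PF.sem M π₂ e f
  | .compl π, e, f => e ∈ M.E ∧ f ∈ M.E ∧ ¬ PF.sem M π e f
end

/-- Sentences of star-free PDL. -/
inductive PDLS (P Lab : Type) : Type where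
  | ex : EF P Lab → PDLS P Lab
  | or : PDLS P Lab → PDLS P Lab → PDLS P Lab
  | not : PDLS P Lab → PDLS P Lab

/-- Satisfaction of PDL sentences. -/
def PDLS.sat {P Lab : Type} (M : MSC P Lab) : PDLS P Lab → Prop
  | .ex φ => ∃ e ∈ M.E, EF.sat M φ e
  | .or ξ ζ => PDLS.sat M ξ ∨ PDLS.sat M ζ
  | .not ξ => ¬ PDLS.sat M ξ

/-- The four optional operators of star-free PDL. -/
inductive PDLOp : Type where
  | loop | union | inter | compl
deriving DecidableEq

mutual
/-- `EF.inFrag R φ` : the event formula `φ` belongs to the fragment `PDLsf[R]`. -/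
def EF.inFrag {P Lab : Type} (R : Set PDLOp) : EF P Lab → Prop
  | .proc _ => True
  | .lab _ => True
  | .or φ ψ => EF.inFrag R φ ∧ EF.inFrag R ψ
  | .not φ => EF.inFrag R φ
  | .dia π φ => PF.inFrag R π ∧ EF.inFrag R φ
  | .loop π => PDLOp.loop ∈ R ∧ PF.inFrag R π
/-- `PF.inFrag R π` : the path formula `π` belongs to the fragment `PDLsf[R]`. -/
def PF.inFrag {P Lab : Type} (R : Set PDLOp) : PF P Lab → Prop
  | .next => True
  | .prev => True
  | .msg _ _ => True
  | .msgInv _ _ => True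
  | .nextG φ => EF.inFrag R φ
  | .prevG φ => EF.inFrag R φ
  | .jump _ _ => True
  | .test φ => EF.inFrag R φ
  | .comp π₁ π₂ => PF.inFrag R π₁ ∧ PF.inFrag R π₂
  | .union π₁ π₂ => PDLOp.union ∈ R ∧ PF.inFrag R π₁ ∧ PF.inFrag R π₂
  | .inter π₁ π₂ => PDLOp.inter ∈ R ∧ PF.inFrag R π₁ ∧ PF.inFrag R π₂
  | .compl π => PDLOp.compl ∈ R ∧ PF.inFrag R π
end

/-- `PDLS.inFrag R ξ` : the sentence `ξ` belongs to the fragment `PDLsf[R]`. -/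
def PDLS.inFrag {P Lab : Type} (R : Set PDLOp) : PDLS P Lab → Prop
  | .ex φ => EF.inFrag R φ
  | .or ξ ζ => PDLS.inFrag R ξ ∧ PDLS.inFrag R ζ
  | .not ξ => PDLS.inFrag R ξ

/-- Conjunction of event formulas (derived operator). -/
def EF.and {P Lab : Type} (φ ψ : EF P Lab) : EF P Lab :=
  .not (.or (.not φ) (.not ψ))

/-- `isMinOf M π e m` : `m` is the `≤proc`-least element of `⟦π⟧_M(e)`
(in particular `⟦π⟧_M(e)` is nonempty). -/
def isMinOf {P Lab : Type} (M : MSC P Lab) (π : PF P Lab) (e m : ℕ) : Prop :=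
  PF.sem M π e m ∧ ∀ f, PF.sem M π e f → M.procLe m f

/-- `isMaxOf M π e m` : `m` is the `≤proc`-greatest element of `⟦π⟧_M(e)`
(in particular `⟦π⟧_M(e)` is nonempty). -/
def isMaxOf {P Lab : Type} (M : MSC P Lab) (π : PF P Lab) (e m : ℕ) : Prop :=
  PF.sem M π e m ∧ ∀ f, PF.sem M π e f → M.procLe f m

/-! ## MSO/FO logic over MSCs -/

/-- Formulas of MSO over MSCs: first-order kernel with atoms `p(x)`, `a(x)`,
`x = y`, `x → y`, `x ◁ y`, `x ≤ y` and additionally `x ∈ X_k` (monadic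
second-order variables, used for the EMSO prefix). -/
inductive FOS (P Lab : Type) : Type where
  | pred : P → ℕ → FOS P Lab
  | lab : Lab → ℕ → FOS P Lab
  | eq : ℕ → ℕ → FOS P Lab
  | edge : ℕ → ℕ → FOS P Lab
  | medge : ℕ → ℕ → FOS P Lab
  | le : ℕ → ℕ → FOS P Lab
  | inSet : ℕ → ℕ → FOS P Lab
  | or : FOS P Lab → FOS P Lab → FOS P Lab
  | not : FOS P Lab → FOS P Lab
  | ex : ℕ → FOS P Lab → FOS P Lab

/-- Satisfaction, with a first-order valuation `ν` and a second-order valuation `σ`.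
First-order quantification ranges over the events of the MSC. -/
def FOS.sat {P Lab : Type} (M : MSC P Lab) : FOS P Lab → (ℕ → ℕ) → (ℕ → Set ℕ) → Prop
  | .pred p x, ν, _ => M.loc (ν x) = p
  | .lab a x, ν, _ => M.lab (ν x) = a
  | .eq x y, ν, _ => ν x = ν y
  | .edge x y, ν, _ => M.proc (ν x) (ν y)
  | .medge x y, ν, _ => M.msg (ν x) (ν y)
  | .le x y, ν, _ => M.hb (ν x) (ν y)
  | .inSet x k, ν, σ => ν x ∈ σ k
  | .or Φ Ψ, ν, σ => FOS.sat M Φ ν σ ∨ FOS.sat M Ψ ν σ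
  | .not Φ, ν, σ => ¬ FOS.sat M Φ ν σ
  | .ex x Φ, ν, σ => ∃ e ∈ M.E, FOS.sat M Φ (Function.update ν x e) σ

/-- Free first-order variables. -/
def FOS.free {P Lab : Type} : FOS P Lab → Finset ℕ
  | .pred _ x => {x}
  | .lab _ x => {x}
  | .eq x y => {x, y}
  | .edge x y => {x, y}
  | .medge x y => {x, y}
  | .le x y => {x, y}
  | .inSet x _ => {x}
  | .or Φ Ψ => FOS.free Φ ∪ FOS.free Ψ
  | .not Φ => FOS.free Φ
  | .ex x Φ => (FOS.free Φ).erase x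

/-- All first-order variables occurring (free or bound). -/
def FOS.vars {P Lab : Type} : FOS P Lab → Finset ℕ
  | .pred _ x => {x}
  | .lab _ x => {x}
  | .eq x y => {x, y}
  | .edge x y => {x, y}
  | .medge x y => {x, y}
  | .le x y => {x, y}
  | .inSet x _ => {x}
  | .or Φ Ψ => FOS.vars Φ ∪ FOS.vars Ψ
  | .not Φ => FOS.vars Φ
  | .ex x Φ => insert x (FOS.vars Φ)

/-- A formula is first-order (`FO[→,◁,≤]`) iff it contains no set atoms. -/
def FOS.noSets {P Lab : Type} : FOS P Lab → Prop
  | .pred _ _ => True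
  | .lab _ _ => True
  | .eq _ _ => True
  | .edge _ _ => True
  | .medge _ _ => True
  | .le _ _ => True
  | .inSet _ _ => False
  | .or Φ Ψ => FOS.noSets Φ ∧ FOS.noSets Ψ
  | .not Φ => FOS.noSets Φ
  | .ex _ Φ => FOS.noSets Φ

/-! ## Communicating finite-state machines -/

/-- Actions of a process: internal `⟨a⟩`, send `!(a,m,q)`, receive `?(a,m,q)`. -/
inductive CAct (P Lab Msg : Type) : Type where
  | int : Lab → CAct P Lab Msg
  | snd : Lab → Msg → P → CAct P Lab Msg
  | rcv : Lab → Msg → P → CAct P Lab Msg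

/-- The label performed by an action. -/
def CAct.label {P Lab Msg : Type} : CAct P Lab Msg → Lab
  | .int a => a
  | .snd a _ _ => a
  | .rcv a _ _ => a

/-- A communicating finite-state machine over `P` and `Lab`. -/
structure CFM (P Lab : Type) where
  /-- states -/
  S : Type
  finS : Fintype S
  /-- messages -/
  Msg : Type
  finMsg : Fintype Msg
  /-- initial state of each process -/
  ι : P → S
  /-- transition relation of each process -/
  Δ : P → S → CAct P Lab Msg → S → Prop
  Δ_snd : ∀ p s a m q s', Δ p s (.snd a m q) s' → q ≠ p
  Δ_rcv : ∀ p s a m q s', Δ p s (.rcv a m q) s' → q ≠ p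
  /-- acceptance condition -/
  Acc : (P → S) → Prop

/-- Existence of an accepting run of a CFM on an MSC. -/
def CFM.Accepts {P Lab : Type} (A : CFM P Lab) (M : MSC P Lab) : Prop :=
  ∃ (src tgt : ℕ → A.S) (act : ℕ → CAct P Lab A.Msg),
    (∀ e ∈ M.E, A.Δ (M.loc e) (src e) (act e) (tgt e)) ∧
    (∀ e ∈ M.E, (act e).label = M.lab e) ∧
    (∀ e ∈ M.E, (¬ ∃ f, M.proc f e) → src e = A.ι (M.loc e)) ∧
    (∀ e f, M.proc e f → tgt e = src f) ∧
    (∀ e ∈ M.E, (¬ ∃ f, M.msg e f) → (¬ ∃ f, M.msg f e) → ∃ a, act e = .int a) ∧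
    (∀ e f, M.msg e f →
      ∃ a a' m, act e = .snd a m (M.loc f) ∧ act f = .rcv a' m (M.loc e)) ∧
    (∃ fin : P → A.S,
      (∀ p, (∀ e ∈ M.E, M.loc e ≠ p) → fin p = A.ι p) ∧
      (∀ e ∈ M.E, (¬ ∃ f, M.proc e f) → fin (M.loc e) = tgt e) ∧
      A.Acc fin)

/-- The language of a CFM. -/
def CFM.lang {P Lab : Type} (A : CFM P Lab) : Set (MSC P Lab) := {M | A.Accepts M}

/-! ## Letter-to-letter MSC transducers -/

/-- The relation accepted by a letter-to-letter MSC transducer from `Lab` to `Γ`,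
i.e., a CFM over `P` and `Lab × Γ`. -/
def Ltrans {P Lab Γ : Type} (A : CFM P (Lab × Γ)) (M : MSC P Lab) (N : MSC P Γ) : Prop :=
  ∃ γ : ℕ → Γ, N = M.relabel γ ∧ A.Accepts (M.relabel fun e => (M.lab e, γ e))

/-- `M_φ` : the MSC over `Bool` obtained from `M` by labelling each event with
the truth value of the event formula `φ`. -/
noncomputable def MSC.evalEF {P Lab : Type} (M : MSC P Lab) (φ : EF P Lab) : MSC P Bool :=
  M.relabel fun e => @ite Bool (EF.sat M φ e) (Classical.propDecidable _) true false

/-! ## Boolean combinations -/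

/-- Boolean combinations over atoms of type `α`. -/
inductive BC (α : Type) : Type where
  | atom : α → BC α
  | or : BC α → BC α → BC α
  | not : BC α → BC α

/-- Evaluation of a boolean combination given truth values of the atoms. -/
def BC.eval {α : Type} (v : α → Prop) : BC α → Prop
  | .atom a => v a
  | .or b c => BC.eval v b ∨ BC.eval v c
  | .not b => ¬ BC.eval v b

/-- The atoms occurring in a boolean combination. -/
def BC.atoms {α : Type} : BC α → Set α
  | .atom a => {a}
  | .or b c => BC.atoms b ∪ BC.atoms c
  | .not b => BC.atoms b

/-! ## Bounded MSCs -/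

/-- `r` is a linearization of `M`: a total order on the events containing
the happened-before relation. -/
def IsLinearization {P Lab : Type} (M : MSC P Lab) (r : ℕ → ℕ → Prop) : Prop :=
  (∀ e ∈ M.E, r e e) ∧
  (∀ e ∈ M.E, ∀ f ∈ M.E, r e f → r f e → e = f) ∧
  (∀ e ∈ M.E, ∀ f ∈ M.E, ∀ g ∈ M.E, r e f → r f g → r e g) ∧
  (∀ e ∈ M.E, ∀ f ∈ M.E, r e f ∨ r f e) ∧
  (∀ e ∈ M.E, ∀ f ∈ M.E, M.hb e f → r e f)

/-- `r` is a `B`-bounded linearization of `M`: at any point, each channel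
contains at most `B` pending messages. -/
def IsBBoundedLin {P Lab : Type} (M : MSC P Lab) (r : ℕ → ℕ → Prop) (B : ℕ) : Prop :=
  IsLinearization M r ∧
  ∀ g ∈ M.E, ∀ p q : P, p ≠ q →
    Set.ncard {ef : ℕ × ℕ | M.msg ef.1 ef.2 ∧ M.loc ef.1 = p ∧ M.loc ef.2 = q ∧
      r ef.1 g ∧ ¬ r ef.2 g} ≤ B

/-- `M` is `∃B`-bounded: some linearization of `M` is `B`-bounded. -/
def ExistsBBounded {P Lab : Type} (M : MSC P Lab) (B : ℕ) : Prop :=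
  ∃ r : ℕ → ℕ → Prop, IsBBoundedLin M r B

/-- `g` is a send event on channel `(p,q)`. -/
def isSendOn {P Lab : Type} (M : MSC P Lab) (p q : P) (g : ℕ) : Prop :=
  M.loc g = p ∧ ∃ h, M.msg g h ∧ M.loc h = q

/-- `revB M B f g` : `f` is a receive event with matching send `e` on some
channel `(p,q)`, and `g` is the `B`-th send on channel `(p,q)` strictly after `e`. -/
def revB {P Lab : Type} (M : MSC P Lab) (B : ℕ) (f g : ℕ) : Prop :=
  ∃ e, M.msg e f ∧ isSendOn M (M.loc e) (M.loc f) g ∧ M.procLt e g ∧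
    Set.ncard {g' | isSendOn M (M.loc e) (M.loc f) g' ∧ M.procLt e g' ∧ M.procLe g' g} = B

/-- `≤_B = (≤ ∪ rev_B)*`. -/
def leB {P Lab : Type} (M : MSC P Lab) (B : ℕ) : ℕ → ℕ → Prop :=
  Relation.ReflTransGen (fun a b => (M.proc a b ∨ M.msg a b) ∨ revB M B a b)

/-- `<_B`, the strict part of `≤_B`. -/
def ltB {P Lab : Type} (M : MSC P Lab) (B : ℕ) (e f : ℕ) : Prop :=
  leB M B e f ∧ ¬ leB M B f e

/-- `e ∥_B f` : incomparable w.r.t. `≤_B`. -/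
def parB {P Lab : Type} (M : MSC P Lab) (B : ℕ) (e f : ℕ) : Prop :=
  ¬ leB M B e f ∧ ¬ leB M B f e

/-- `↑_B e = {g : e ≤_B g}`. -/
def upB {P Lab : Type} (M : MSC P Lab) (B : ℕ) (e : ℕ) : Set ℕ :=
  {g | leB M B e g}

/-- The order `≺_B` (w.r.t. a fixed total order on `P`): `e ≺_B f` iff `e <_B f`, or
`e ∥_B f` and the `⊑`-minimum of `loc(↑_B e \ ↑_B f)` is strictly below the
`⊑`-minimum of `loc(↑_B f \ ↑_B e)`. -/
def precB {P Lab : Type} [LinearOrder P] (M : MSC P Lab) (B : ℕ) (e f : ℕ) : Prop :=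
  ltB M B e f ∨
    (parB M B e f ∧ ∃ p ∈ M.loc '' (upB M B e \ upB M B f),
      ∀ q ∈ M.loc '' (upB M B f \ upB M B e), p < q)


/-! The targets of a `PDLsf[Loop]` path formula `π` from `e` lie on one process: without `∪`,
`∩` and complement, the location of the source of a `π`-pair determines that of its target and
conversely. So they form a finite `≤proc`-chain, with a least and a greatest element.
The heart of the matter is that `π`-pairs can be uncrossed: if `(e, f)` and `(e', f')` are
`π`-pairs with `e ≤proc e'` and `f' ≤proc f`, then so are `(e, f')` and `(e', f)`. For `→`, `←`,
`◁` and `◁⁻¹` this holds because these edges preserve and reflect `≤proc` (for `◁` this is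
FIFO), so two of them never cross; for a composition one compares the two midpoints and
uncrosses on the side where they are ordered the right way. Now if `min ≤proc f ≤proc max` and
`(g, f)` is a `π`-pair, then `g` and `e` lie on one process, and uncrossing `(g, f)` with
`(e, max)` or with `(e, min)`, according to the order of `e` and `g`, yields `(e, f)`. -/

theorem Finset.exists_forall_rel_of_total {α : Type*} {r : α → α → Prop}
    (htrans : ∀ {a b c}, r a b → r b c → r a c)
    {s : Finset α} (hs : s.Nonempty) (htot : ∀ x ∈ s, ∀ y ∈ s, r x y ∨ r y x) :
    ∃ m ∈ s, ∀ x ∈ s, r m x := by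
  induction hs using Finset.Nonempty.cons_induction with
  | singleton a => simpa using htot
  | cons a s _ _ ih =>
    simp only [Finset.mem_cons, forall_eq_or_imp] at htot ⊢
    obtain ⟨m, hm, hm_le⟩ := ih fun x hx y hy => htot.2 x hx |>.2 y hy
    rcases htot.1.2 m hm with ham | hma
    · exact ⟨a, Or.inl rfl, htot.1.1.elim id id,
        fun x hx => htrans ham (hm_le x hx)⟩
    · exact ⟨m, Or.inr hm, hma, hm_le⟩

namespace MSC

variable {P Lab : Type} {M : MSC P Lab} {a b c e f e' f' : ℕ}

theorem mem_of_procLt (h : M.procLt a b) : a ∈ M.E ∧ b ∈ M.E := by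
  induction h with
  | single h => exact M.proc_mem _ _ h
  | tail _ h ih => exact ⟨ih.1, (M.proc_mem _ _ h).2⟩

theorem loc_eq_of_procLe (h : M.procLe a b) : M.loc a = M.loc b := by
  induction h with
  | refl => rfl
  | tail _ h ih => exact ih.trans (M.proc_loc _ _ h)

theorem loc_eq_of_procLt (h : M.procLt a b) : M.loc a = M.loc b :=
  loc_eq_of_procLe h.to_reflTransGen

theorem procLt_irrefl (a : ℕ) : ¬ M.procLt a a := fun h =>
  M.acyclic a (Relation.TransGen.mono (fun _ _ => Or.inl) a a h)

theorem procLt_of_procLe_of_ne (h : M.procLe a b) (hne : a ≠ b) : M.procLt a b :=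
  (Relation.reflTransGen_iff_eq_or_transGen.mp h).resolve_left (Ne.symm hne)

theorem procLe_antisymm (h₁ : M.procLe a b) (h₂ : M.procLe b a) : a = b := by
  by_contra hne
  exact procLt_irrefl a ((procLt_of_procLe_of_ne h₁ hne).trans_left h₂)

theorem procLe_total (ha : a ∈ M.E) (hb : b ∈ M.E) (hl : M.loc a = M.loc b) :
    M.procLe a b ∨ M.procLe b a := by
  rcases M.proc_total a b ha hb hl with rfl | h | h
  · exact Or.inl .refl
  · exact Or.inl h.to_reflTransGen
  · exact Or.inr h.to_reflTransGen

theorem proc_right_unique (h₁ : M.proc a b) (h₂ : M.proc a c) : b = c := by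
  by_contra hne
  have hl : M.loc b = M.loc c := (M.proc_loc _ _ h₁).symm.trans (M.proc_loc _ _ h₂)
  rcases M.proc_total b c (M.proc_mem _ _ h₁).2 (M.proc_mem _ _ h₂).2 hl with rfl | h | h
  · exact hne rfl
  · exact M.proc_cover a c h₂ ⟨b, .single h₁, h⟩
  · exact M.proc_cover a b h₁ ⟨c, .single h₂, h⟩

theorem procLe_of_proc_of_procLt (h : M.proc a b) (hac : M.procLt a c) : M.procLe b c := by
  obtain ⟨x, hax, hxc⟩ := Relation.TransGen.head'_iff.mp hac
  rwa [proc_right_unique h hax]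

theorem procLe_of_proc_of_procLe (h : M.proc e f) (h' : M.proc e' f') (hle : M.procLe e e') :
    M.procLe f f' := by
  by_cases heq : e = e'
  · subst heq
    exact proc_right_unique h h' ▸ .refl
  · exact (procLe_of_proc_of_procLt h (procLt_of_procLe_of_ne hle heq)).tail h'

theorem procLe_iff_of_proc (h : M.proc e f) (h' : M.proc e' f') :
    M.procLe e e' ↔ M.procLe f f' := by
  refine ⟨procLe_of_proc_of_procLe h h', fun hff => ?_⟩
  have hl : M.loc e = M.loc e' :=
    (M.proc_loc _ _ h).trans ((loc_eq_of_procLe hff).trans (M.proc_loc _ _ h').symm)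
  rcases procLe_total (M.proc_mem _ _ h).1 (M.proc_mem _ _ h').1 hl with hee | hee
  · exact hee
  by_cases heq : e' = e
  · exact heq ▸ .refl
  have hf'f : M.procLt f' f :=
    Relation.TransGen.tail' (procLe_of_proc_of_procLt h' (procLt_of_procLe_of_ne hee heq)) h
  exact absurd (hf'f.trans_left hff) (procLt_irrefl f')

theorem uncross_of_procLe_iff {R : ℕ → ℕ → Prop}
    (hR : ∀ {e f e' f'}, R e f → R e' f' → (M.procLe e e' ↔ M.procLe f f'))
    (h : R e f) (h' : R e' f') (he : M.procLe e e') (hf : M.procLe f' f) :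
    R e f' ∧ R e' f := by
  obtain ⟨rfl, rfl⟩ : e = e' ∧ f = f' :=
    ⟨procLe_antisymm he ((hR h' h).2 hf), procLe_antisymm ((hR h h').1 he) hf⟩
  exact ⟨h, h⟩

theorem exists_procLe_least {s : Set ℕ} (hsE : s ⊆ M.E) (hs : s.Nonempty)
    (hloc : ∀ x ∈ s, ∀ y ∈ s, M.loc x = M.loc y) :
    ∃ m ∈ s, ∀ x ∈ s, M.procLe m x := by
  have hfin := M.E.finite_toSet.subset hsE
  simpa using Finset.exists_forall_rel_of_total (s := hfin.toFinset)
    (fun h₁ h₂ => h₁.trans h₂) (by simpa using hs)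
    (by simpa using fun x hx y hy => procLe_total (hsE hx) (hsE hy) (hloc x hx y hy))

theorem exists_procLe_greatest {s : Set ℕ} (hsE : s ⊆ M.E) (hs : s.Nonempty)
    (hloc : ∀ x ∈ s, ∀ y ∈ s, M.loc x = M.loc y) :
    ∃ m ∈ s, ∀ x ∈ s, M.procLe x m := by
  have hfin := M.E.finite_toSet.subset hsE
  simpa [flip] using Finset.exists_forall_rel_of_total (s := hfin.toFinset)
    (r := flip M.procLe) (fun h₁ h₂ => h₂.trans h₁) (by simpa using hs)
    (by simpa [flip] using fun x hx y hy => procLe_total (hsE hy) (hsE hx) (hloc y hy x hx))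

end MSC

mutual

theorem EF.mem_of_sat {P Lab : Type} {M : MSC P Lab} :
    ∀ {φ : EF P Lab} {e : ℕ}, EF.sat M φ e → e ∈ M.E
  | .proc _, _, h => h.1
  | .lab _, _, h => h.1
  | .or _ _, _, h => h.elim EF.mem_of_sat EF.mem_of_sat
  | .not _, _, h => h.1
  | .dia _ _, _, ⟨_, h, _⟩ => (PF.mem_of_sem h).1
  | .loop _, _, h => (PF.mem_of_sem h).1

theorem PF.mem_of_sem {P Lab : Type} {M : MSC P Lab} :
    ∀ {π : PF P Lab} {e f : ℕ}, PF.sem M π e f → e ∈ M.E ∧ f ∈ M.E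
  | .next, _, _, h => M.proc_mem _ _ h
  | .prev, _, _, h => (M.proc_mem _ _ h).symm
  | .msg _ _, _, _, h => M.msg_mem _ _ h.1
  | .msgInv _ _, _, _, h => (M.msg_mem _ _ h.1).symm
  | .nextG _, _, _, h => MSC.mem_of_procLt h.1
  | .prevG _, _, _, h => (MSC.mem_of_procLt h.1).symm
  | .jump _ _, _, _, h => ⟨h.1, h.2.1⟩
  | .test _, _, _, ⟨rfl, h⟩ => ⟨EF.mem_of_sat h, EF.mem_of_sat h⟩
  | .comp _ _, _, _, ⟨_, h₁, h₂⟩ => ⟨(PF.mem_of_sem h₁).1, (PF.mem_of_sem h₂).2⟩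
  | .union _ _, _, _, h => h.elim PF.mem_of_sem PF.mem_of_sem
  | .inter _ _, _, _, h => PF.mem_of_sem h.1
  | .compl _, _, _, h => ⟨h.1, h.2.1⟩

end

namespace PF

open Relation

variable {P Lab : Type} {M : MSC P Lab}

theorem loc_eq_iff_loc_eq_of_sem :
    ∀ {π : PF P Lab}, π.inFrag {PDLOp.loop} →
      ∀ {e f e' f' : ℕ}, π.sem M e f → π.sem M e' f' →
        (M.loc e = M.loc e' ↔ M.loc f = M.loc f')
  | .next, _, e, f, e', f', h, h' => by rw [M.proc_loc e f h, M.proc_loc e' f' h']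
  | .prev, _, e, f, e', f', h, h' => by rw [M.proc_loc f e h, M.proc_loc f' e' h']
  | .msg _ _, _, _, _, _, _, ⟨_, rfl, rfl⟩, ⟨_, h₁, h₂⟩ => by simp [h₁, h₂]
  | .msgInv _ _, _, _, _, _, _, ⟨_, rfl, rfl⟩, ⟨_, h₁, h₂⟩ => by simp [h₁, h₂]
  | .nextG _, _, _, _, _, _, h, h' => by
      rw [MSC.loc_eq_of_procLt h.1, MSC.loc_eq_of_procLt h'.1]
  | .prevG _, _, _, _, _, _, h, h' => by
      rw [MSC.loc_eq_of_procLt h.1, MSC.loc_eq_of_procLt h'.1]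
  | .jump _ _, _, _, _, _, _, ⟨_, _, rfl, rfl⟩, ⟨_, _, h₁, h₂⟩ => by simp [h₁, h₂]
  | .test _, _, _, _, _, _, ⟨rfl, _⟩, ⟨rfl, _⟩ => Iff.rfl
  | .comp _ _, hπ, _, _, _, _, ⟨_, h₁, h₂⟩, ⟨_, h₁', h₂'⟩ =>
      (loc_eq_iff_loc_eq_of_sem hπ.1 h₁ h₁').trans (loc_eq_iff_loc_eq_of_sem hπ.2 h₂ h₂')
  | .union _ _, hπ, _, _, _, _, _, _ => by simp [inFrag] at hπ
  | .inter _ _, hπ, _, _, _, _, _, _ => by simp [inFrag] at hπ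
  | .compl _, hπ, _, _, _, _, _, _ => by simp [inFrag] at hπ

theorem sem_uncross :
    ∀ {π : PF P Lab}, π.inFrag {PDLOp.loop} →
      ∀ {e f e' f' : ℕ}, π.sem M e f → π.sem M e' f' → M.procLe e e' → M.procLe f' f →
        π.sem M e f' ∧ π.sem M e' f
  | .next, _, _, _, _, _, h, h', he, hf =>
      MSC.uncross_of_procLe_iff MSC.procLe_iff_of_proc h h' he hf
  | .prev, _, _, _, _, _, h, h', he, hf =>
      MSC.uncross_of_procLe_iff (R := fun e f => M.proc f e)
        (fun h h' => (MSC.procLe_iff_of_proc h h').symm) h h' he hf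
  | .msg _ _, _, _, _, _, _, h, h', he, hf =>
      MSC.uncross_of_procLe_iff
        (fun ⟨hm, hp, hq⟩ ⟨hm', hp', hq'⟩ =>
          M.fifo _ _ _ _ hm hm' (hp.trans hp'.symm) (hq.trans hq'.symm)) h h' he hf
  | .msgInv _ _, _, _, _, _, _, h, h', he, hf =>
      MSC.uncross_of_procLe_iff
        (fun ⟨hm, hp, hq⟩ ⟨hm', hp', hq'⟩ =>
          (M.fifo _ _ _ _ hm hm' (hp.trans hp'.symm) (hq.trans hq'.symm)).symm) h h' he hf
  | .test _, _, _, _, _, _, h, h', he, hf =>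
      MSC.uncross_of_procLe_iff (fun ⟨h, _⟩ ⟨h', _⟩ => h ▸ h' ▸ Iff.rfl) h h' he hf
  | .nextG _, _, _, _, _, _, ⟨_, hg⟩, ⟨hlt', _⟩, he, hf =>
      ⟨⟨TransGen.trans_right he hlt', fun g h₁ h₂ => hg g h₁ (h₂.trans_left hf)⟩,
        ⟨hlt'.trans_left hf, fun g h₁ h₂ => hg g (TransGen.trans_right he h₁) h₂⟩⟩
  | .prevG _, _, _, _, _, _, ⟨hlt, _⟩, ⟨_, hg'⟩, he, hf =>
      ⟨⟨TransGen.trans_right hf hlt, fun g h₁ h₂ => hg' g h₁ (h₂.trans_left he)⟩,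
        ⟨hlt.trans_left he, fun g h₁ h₂ => hg' g (TransGen.trans_right hf h₁) h₂⟩⟩
  | .jump _ _, _, _, _, _, _, ⟨he, hf, hpe, hrf⟩, ⟨he', hf', hpe', hrf'⟩, _, _ =>
      ⟨⟨he, hf', hpe, hrf'⟩, ⟨he', hf, hpe', hrf⟩⟩
  | .comp _ _, hπ, _, _, _, _, ⟨g, h₁, h₂⟩, ⟨g', h₁', h₂'⟩, he, hf => by
      have hloc : M.loc g = M.loc g' :=
        (loc_eq_iff_loc_eq_of_sem hπ.1 h₁ h₁').1 (MSC.loc_eq_of_procLe he)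
      rcases M.procLe_total (mem_of_sem h₁).2 (mem_of_sem h₁').2 hloc with hg | hg
      · obtain ⟨c₁, c₂⟩ := sem_uncross hπ.2 h₂ h₂' hg hf
        exact ⟨⟨g, h₁, c₁⟩, ⟨g', h₁', c₂⟩⟩
      · obtain ⟨c₁, c₂⟩ := sem_uncross hπ.1 h₁ h₁' he hg
        exact ⟨⟨g', c₁, h₂'⟩, ⟨g, c₂, h₂⟩⟩
  | .union _ _, hπ, _, _, _, _, _, _, _, _ => by simp [inFrag] at hπ
  | .inter _ _, hπ, _, _, _, _, _, _, _, _ => by simp [inFrag] at hπ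
  | .compl _, hπ, _, _, _, _, _, _, _, _ => by simp [inFrag] at hπ

theorem sem_of_procLe_of_procLe {π : PF P Lab} (hπ : π.inFrag {PDLOp.loop}) {e f g mn mx : ℕ}
    (hmn : π.sem M e mn) (hmx : π.sem M e mx) (hmnf : M.procLe mn f) (hfmx : M.procLe f mx)
    (hg : π.sem M g f) : π.sem M e f := by
  have hloc : M.loc e = M.loc g :=
    (loc_eq_iff_loc_eq_of_sem hπ hmn hg).2 (MSC.loc_eq_of_procLe hmnf)
  rcases M.procLe_total (mem_of_sem hmn).1 (mem_of_sem hg).1 hloc with heg | hge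
  · exact (sem_uncross hπ hmx hg heg hfmx).1
  · exact (sem_uncross hπ hg hmn hge hmnf).2

end PF

/-- For a `PDLsf[Loop]` path formula `π` and an event `e` with
`⟦π⟧(e) ≠ ∅`, the set `⟦π⟧(e)` consists exactly of the events `f` between
`min_π(e)` and `max_π(e)` (w.r.t. `≤proc`) satisfying `⟨π⁻¹⟩true`. -/
theorem pdlsf_loop_image {P Lab : Type}
    [Fintype P] [Nonempty P] [Fintype Lab] [Nonempty Lab]
    (π : PF P Lab) (hπ : PF.inFrag {PDLOp.loop} π)
    (M : MSC P Lab) (e : ℕ) (hne : ∃ f, PF.sem M π e f) :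
    (∃ mn, isMinOf M π e mn) ∧ (∃ mx, isMaxOf M π e mx) ∧
    ∀ mn mx, isMinOf M π e mn → isMaxOf M π e mx →
      ∀ f, (PF.sem M π e f ↔
        (f ∈ M.E ∧ M.procLe mn f ∧ M.procLe f mx ∧ ∃ g, PF.sem M π g f)) := by
  have hsE : {f | PF.sem M π e f} ⊆ M.E := fun f hf => (PF.mem_of_sem hf).2
  have hloc : ∀ x ∈ {f | PF.sem M π e f}, ∀ y ∈ {f | PF.sem M π e f}, M.loc x = M.loc y :=
    fun _ hx _ hy => (PF.loc_eq_iff_loc_eq_of_sem hπ hx hy).1 rfl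
  obtain ⟨m, hm, hm_le⟩ := M.exists_procLe_least hsE hne hloc
  obtain ⟨m', hm', hm'_ge⟩ := M.exists_procLe_greatest hsE hne hloc
  refine ⟨⟨m, hm, hm_le⟩, ⟨m', hm', hm'_ge⟩,
    fun mn mx hmn hmx f => ⟨fun hf => ?_, ?_⟩⟩
  · exact ⟨hsE hf, hmn.2 f hf, hmx.2 f hf, e, hf⟩
  · rintro ⟨-, hmnf, hfmx, g, hg⟩
    exact PF.sem_of_procLe_of_procLe hπ hmn.1 hmx.1 hmnf hfmx hg
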